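/- arXiv:1407.0792 — 2 statements merged into one kernel-verified Lean document; each statement's English description precedes it below -/
import Mathlib

section
/- Fix q with −1 < q ≤ 1 and let X be the Jacobi matrix of the Jacobi sequence ω n = 1 + q + q² + ⋯ + q^n and α n = 0 (the quantum decomposition of the q-Gaussian distribution). Then for every natural number m, lim_{k→∞} ⟨(X/√(ω k + ω(k−1)))^m e_k, e_k⟩ = ∫_{−√2}^{√2} x^m/(π√(2−x²)) dx. -/
/-!
The `(k + j)`-th coordinate of `(c_k X)^m e_k` is a sum over `±1` lattice walks of length `m`
from `0` to `j`, each weighted by a product of `m` factors `c_k √(ω (k + d))` with `|d| ≤ m`.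
For `−1 < q ≤ 1` each factor tends to `1/√2`: either `ω n = n + 1`, or `ω` converges to
`1/(1 - q) > 0`. So the diagonal entry tends to `2^(-m/2)` times the number of walks of
length `m` returning to `0`. The substitution `x = √2 sin θ` turns the arcsine moment into
`2^(m/2)/π · ∫ sin^m` over `[-π/2, π/2]`, and both sides equal `binom(2n, n)/2^n` for
`m = 2n` (Wallis' recursion) and vanish for odd `m`.
-/

open Filter

/-- The Jacobi matrix of a Jacobi sequence `(ω, α)`, acting on finitely supported
real sequences indexed by `ℕ`:
`X e_n = √(ω n)·e_{n+1} + α n·e_n + √(ω (n-1))·e_{n-1}`, last term omitted for `n = 0`. -/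
noncomputable def jacobiOp (ω α : ℕ → ℝ) : (ℕ →₀ ℝ) →ₗ[ℝ] (ℕ →₀ ℝ) :=
  Finsupp.lsum ℝ fun n => LinearMap.toSpanSingleton ℝ (ℕ →₀ ℝ)
    (Real.sqrt (ω n) • Finsupp.single (n + 1) 1 + α n • Finsupp.single n 1 +
      if n = 0 then 0 else Real.sqrt (ω (n - 1)) • Finsupp.single (n - 1) 1)

/-- The `q`-Gaussian Jacobi sequence `ω n = 1 + q + q² + ⋯ + qⁿ`. -/
noncomputable def qOmega (q : ℝ) (n : ℕ) : ℝ := ∑ i ∈ Finset.range (n + 1), q ^ i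

open Topology Real Set MeasureTheory intervalIntegral

def walkCount : ℕ → ℤ → ℕ
  | 0, j => if j = 0 then 1 else 0
  | m + 1, j => walkCount m (j - 1) + walkCount m (j + 1)

lemma walkCount_eq_zero_of_lt_natAbs {m : ℕ} {j : ℤ} (h : m < j.natAbs) : walkCount m j = 0 := by
  induction m generalizing j with
  | zero => simp only [walkCount]; rw [if_neg (by omega)]
  | succ m ih => rw [walkCount, ih (by omega), ih (by omega)]

lemma walkCount_eq_zero_of_odd {m : ℕ} {j : ℤ} (h : Odd (m + j)) : walkCount m j = 0 := by
  induction m generalizing j with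
  | zero => simp only [walkCount]; rw [if_neg (by rintro rfl; simp at h)]
  | succ m ih =>
    rw [Int.odd_iff] at h
    rw [walkCount, ih (by rw [Int.odd_iff]; push_cast at h; omega),
      ih (by rw [Int.odd_iff]; push_cast at h; omega)]

lemma walkCount_two_mul_sub (m i : ℕ) : walkCount m (2 * i - m) = m.choose i := by
  induction m generalizing i with
  | zero => cases i <;> simp [walkCount]; omega
  | succ m ih =>
    cases i with
    | zero =>
      rw [walkCount, walkCount_eq_zero_of_lt_natAbs (by omega)]
      simpa using ih 0
    | succ i =>
      rw [walkCount, Nat.choose_succ_succ', ← ih i, ← ih (i + 1)]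
      push_cast
      congr 2 <;> ring

lemma jacobiOp_apply_succ (ω α : ℕ → ℝ) (f : ℕ →₀ ℝ) (i : ℕ) :
    jacobiOp ω α f (i + 1) = √(ω i) * f i + α (i + 1) * f (i + 1) + √(ω (i + 1)) * f (i + 2) := by
  induction f using Finsupp.induction_linear with
  | zero => simp
  | add f g hf hg => simp only [map_add, Finsupp.add_apply, hf, hg]; ring
  | single n c =>
    simp only [jacobiOp, Finsupp.lsum_single, LinearMap.toSpanSingleton_apply, Finsupp.smul_apply,
      Finsupp.add_apply, Finsupp.single_apply, smul_eq_mul]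
    split_ifs <;> subst_vars <;> first | omega | simp_all [mul_comm]

-- Only large `k` matter, so the truncation of `Int.toNat` at negative offsets is harmless.
theorem tendsto_smul_jacobiOp_pow_single_apply {ω c : ℕ → ℝ} {a : ℝ}
    (hc : ∀ d : ℤ, Tendsto (fun k : ℕ => c k * √(ω (k + d).toNat)) atTop (𝓝 a)) (m : ℕ) (j : ℤ) :
    Tendsto (fun k : ℕ => ((c k • jacobiOp ω (fun _ => 0)) ^ m) (Finsupp.single k 1) (k + j).toNat)
      atTop (𝓝 (a ^ m * walkCount m j)) := by
  induction m generalizing j with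
  | zero =>
    refine tendsto_const_nhds.congr' ?_
    filter_upwards [eventually_ge_atTop j.natAbs] with k hk
    simp only [walkCount, pow_zero, Module.End.one_apply, Finsupp.single_apply]
    split_ifs <;> first | omega | simp
  | succ m ih =>
    have hlim := ((hc (j - 1)).mul (ih (j - 1))).add ((hc j).mul (ih (j + 1)))
    have hval : a ^ (m + 1) * (walkCount (m + 1) j : ℝ) =
        a * (a ^ m * walkCount m (j - 1)) + a * (a ^ m * walkCount m (j + 1)) := by
      simp only [walkCount]; push_cast; ring
    rw [hval]
    refine hlim.congr' ?_
    filter_upwards [eventually_gt_atTop j.natAbs] with k hk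
    obtain ⟨i, hi⟩ : ∃ i, (k + j).toNat = i + 1 := ⟨(k + j).toNat - 1, by omega⟩
    have h1 : (k + (j - 1)).toNat = i := by omega
    have h2 : (k + (j + 1)).toNat = i + 2 := by omega
    rw [hi, h1, h2, pow_succ', Module.End.mul_apply, LinearMap.smul_apply, Finsupp.smul_apply,
      jacobiOp_apply_succ, smul_eq_mul]
    ring

lemma qOmega_pos {q : ℝ} (hq : -1 < q) (n : ℕ) : 0 < qOmega q n :=
  geom_sum_pos' (by linarith) n.succ_ne_zero

lemma qOmega_one (n : ℕ) : qOmega 1 n = n + 1 := by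
  simp [qOmega]

lemma tendsto_qOmega {q : ℝ} (hq : |q| < 1) : Tendsto (qOmega q) atTop (𝓝 (1 - q)⁻¹) :=
  (hasSum_geometric_of_abs_lt_one hq).tendsto_sum_nat.comp (tendsto_add_atTop_nat 1)

lemma tendsto_qOmega_shift_div {q : ℝ} (hq₁ : -1 < q) (hq₂ : q ≤ 1) (d : ℤ) :
    Tendsto (fun k : ℕ => qOmega q (k + d).toNat / (qOmega q k + qOmega q (k - 1)))
      atTop (𝓝 2⁻¹) := by
  rcases hq₂.eq_or_lt with rfl | hq₂
  · have hlin := tendsto_add_mul_div_add_mul_atTop_nhds ((d : ℝ) + 1) 1 1 (two_ne_zero' ℝ)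
    rw [one_div] at hlin
    refine hlin.congr' ?_
    filter_upwards [eventually_gt_atTop d.natAbs] with k hk
    have hd : (((k + d).toNat : ℕ) : ℝ) = k + d := by exact_mod_cast Int.toNat_of_nonneg (by omega)
    have hk1 : ((k - 1 : ℕ) : ℝ) = k - 1 := by rw [Nat.cast_sub (by omega)]; simp
    simp only [qOmega_one, hd, hk1]
    ring
  · have hL := tendsto_qOmega (abs_lt.2 ⟨hq₁, hq₂⟩)
    have hshift : Tendsto (fun k : ℕ => (k + d).toNat) atTop atTop :=
      tendsto_atTop_atTop.2 fun b => ⟨b + d.natAbs, fun k hk => by omega⟩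
    have hL0 : (1 - q)⁻¹ ≠ 0 := inv_ne_zero (by linarith)
    have hlim := (hL.comp hshift).div (hL.add (hL.comp (tendsto_sub_atTop_nat 1)))
      (by simpa [← two_mul] using hL0)
    rwa [← two_mul, div_mul_cancel_right₀ hL0] at hlim

lemma tendsto_inv_sqrt_mul_sqrt_qOmega {q : ℝ} (hq₁ : -1 < q) (hq₂ : q ≤ 1) (d : ℤ) :
    Tendsto (fun k : ℕ => 1 / √(qOmega q k + qOmega q (k - 1)) * √(qOmega q (k + d).toNat))
      atTop (𝓝 (√2)⁻¹) := by
  rw [← sqrt_inv]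
  refine ((continuous_sqrt.tendsto _).comp (tendsto_qOmega_shift_div hq₁ hq₂ d)).congr fun k => ?_
  rw [Function.comp_apply, sqrt_div (qOmega_pos hq₁ _).le, div_eq_inv_mul, one_div]

lemma integral_sin_pow_add_two_neg_pi_div_two (m : ℕ) :
    ∫ θ in -(π / 2)..π / 2, sin θ ^ (m + 2) =
      (m + 1) / (m + 2) * ∫ θ in -(π / 2)..π / 2, sin θ ^ m := by
  simp [integral_sin_pow]

lemma integral_sin_pow_two_mul_neg_pi_div_two (n : ℕ) :
    ∫ θ in -(π / 2)..π / 2, sin θ ^ (2 * n) = π * n.centralBinom / 4 ^ n := by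
  induction n with
  | zero => simp
  | succ n ih =>
    have hrec : ((n : ℝ) + 1) * (n + 1).centralBinom = 2 * (2 * n + 1) * n.centralBinom := by
      exact_mod_cast Nat.succ_mul_centralBinom_succ n
    rw [mul_add_one, integral_sin_pow_add_two_neg_pi_div_two, ih]
    field_simp
    push_cast
    linear_combination (-2 * 4 ^ n) * hrec

lemma integral_sin_pow_two_mul_add_one_neg_pi_div_two (n : ℕ) :
    ∫ θ in -(π / 2)..π / 2, sin θ ^ (2 * n + 1) = 0 := by
  induction n with
  | zero => simp
  | succ n ih =>
    rw [mul_add_one, add_right_comm, integral_sin_pow_add_two_neg_pi_div_two, ih, mul_zero]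

lemma integral_sin_pow_neg_pi_div_two_eq_walkCount (m : ℕ) :
    ∫ θ in -(π / 2)..π / 2, sin θ ^ m = π * walkCount m 0 / 2 ^ m := by
  obtain ⟨n, rfl | rfl⟩ := Nat.even_or_odd' m
  · have hreturn := walkCount_two_mul_sub (2 * n) n
    rw [Nat.cast_mul, Nat.cast_two, sub_self, ← Nat.centralBinom_eq_two_mul_choose] at hreturn
    rw [integral_sin_pow_two_mul_neg_pi_div_two, hreturn, pow_mul]
    norm_num
  · rw [integral_sin_pow_two_mul_add_one_neg_pi_div_two, walkCount_eq_zero_of_odd (by simp)]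
    simp

lemma image_mul_sin_Ioo {r : ℝ} (hr : 0 < r) :
    (fun θ => r * sin θ) '' Ioo (-(π / 2)) (π / 2) = Ioo (-r) r := by
  rw [← image_image (r * ·), continuous_sin.continuousOn.image_Ioo_of_strictMonoOn
    (by linarith [pi_pos]) strictMonoOn_sin, image_mul_left_Ioo hr]
  simp

lemma integral_div_sqrt_sq_sub_sq (f : ℝ → ℝ) {r : ℝ} (hr : 0 < r) :
    ∫ x in -r..r, f x / √(r ^ 2 - x ^ 2) = ∫ θ in -(π / 2)..π / 2, f (r * sin θ) := by
  rw [integral_of_le (by linarith), integral_of_le (by linarith [pi_pos]),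
    integral_Ioc_eq_integral_Ioo, integral_Ioc_eq_integral_Ioo, ← image_mul_sin_Ioo hr,
    integral_image_eq_integral_abs_deriv_smul measurableSet_Ioo
      (fun θ _ => ((hasDerivAt_sin θ).const_mul r).hasDerivWithinAt)
      (fun a ha b hb hab => injOn_sin (Ioo_subset_Icc_self ha) (Ioo_subset_Icc_self hb)
        (mul_left_cancel₀ hr.ne' hab))]
  refine setIntegral_congr_fun measurableSet_Ioo fun θ hθ => ?_
  have hcos : 0 < r * cos θ := mul_pos hr (cos_pos_of_mem_Ioo hθ)
  have hsqrt : √(r ^ 2 - (r * sin θ) ^ 2) = r * cos θ := by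
    rw [← sqrt_sq hcos.le, mul_pow, mul_pow, cos_sq']
    congr 1; ring
  rw [hsqrt, abs_of_pos hcos, smul_eq_mul, mul_div_cancel₀ _ hcos.ne']

lemma integral_pow_div_pi_mul_sqrt_sq_sub_sq (m : ℕ) {r : ℝ} (hr : 0 < r) :
    ∫ x in -r..r, x ^ m / (π * √(r ^ 2 - x ^ 2)) = (r / 2) ^ m * walkCount m 0 := by
  calc ∫ x in -r..r, x ^ m / (π * √(r ^ 2 - x ^ 2))
      = ∫ x in -r..r, x ^ m / π / √(r ^ 2 - x ^ 2) := by simp only [div_div]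
    _ = r ^ m / π * ∫ θ in -(π / 2)..π / 2, sin θ ^ m := by
        rw [integral_div_sqrt_sq_sub_sq _ hr, ← intervalIntegral.integral_const_mul]
        simp only [mul_pow]; congr 1; ext; ring
    _ = (r / 2) ^ m * walkCount m 0 := by
        rw [integral_sin_pow_neg_pi_div_two_eq_walkCount, div_pow]
        field_simp

/-- Classical limit of the quantum decomposition of the `q`-Gaussian distribution
(`−1 < q ≤ 1`, `ω n = 1 + q + ⋯ + qⁿ`, `α n = 0`): the normalized moments converge
to those of the arcsine law. -/
theorem qGaussian_classical_limit_arcsine (q : ℝ) (hq₁ : -1 < q) (hq₂ : q ≤ 1) (m : ℕ) :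
    Tendsto
      (fun k : ℕ =>
        ((((1 / Real.sqrt (qOmega q k + qOmega q (k - 1))) •
            jacobiOp (qOmega q) (fun _ => 0)) ^ m)
          (Finsupp.single k 1)) k)
      atTop
      (nhds (∫ x in (-Real.sqrt 2)..(Real.sqrt 2), x ^ m / (Real.pi * Real.sqrt (2 - x ^ 2)))) := by
  have hentry := tendsto_smul_jacobiOp_pow_single_apply
    (tendsto_inv_sqrt_mul_sqrt_qOmega hq₁ hq₂) m 0
  simp only [add_zero, Int.toNat_natCast] at hentry
  convert hentry using 2
  have harcsine := integral_pow_div_pi_mul_sqrt_sq_sub_sq m (sqrt_pos.2 two_pos)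
  rwa [sq_sqrt zero_le_two, sqrt_div_self', one_div] at harcsine
end

section
/- Fix a nonzero real number c. For every natural number m, the 2m-th moment of the discrete arcsine law satisfies Σ_{n∈ℤ} (c·n)^{2m} |a_n(c)|² ≤ (√2 + 2|c|·m)^{2m}. -/
/-- `a_n(c)`, the `n`-th Fourier coefficient of `t ↦ exp(i·√2·sin t / c)`. -/
noncomputable def arcsineFourierCoeff (c : ℝ) (n : ℤ) : ℂ :=
  (1 / (2 * Real.pi)) * ∫ t in (0 : ℝ)..(2 * Real.pi),
    Complex.exp (Complex.I * ((Real.sqrt 2 * Real.sin t / c : ℝ) : ℂ)) *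
      Complex.exp (-(Complex.I * (n : ℂ) * (t : ℂ)))

/-!
With `a = √2 / c`, the coefficient `a_n(c)` is the Bessel function `Jₙ(a)`, given by Bessel's
integral. Integrating the derivative of `exp (i (a sin t - n t))` over a period gives the
recurrence `n Jₙ = (a/2) (Jₙ₋₁ + Jₙ₊₁)`. Iterating it writes `n ^ m Jₙ` as a combination
`∑_{|j| ≤ m} d j Jₙ₊ⱼ` of shifts, with `∑ |d j| ≤ (|a| + m) ^ m`, since each multiplication by
`n` raises the `ℓ¹` norm of the coefficients by a factor of at most `m + |a|`. Cauchy–Schwarz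
bounds the `ℓ²` norm of such a combination by `∑ |d j|` times that of `J`, and Parseval gives
`∑ |Jₙ|² = 1`, because `t ↦ exp (i a sin t)` has modulus one. Hence
`∑ n^{2m} |Jₙ|² ≤ (|a| + m)^{2m}`; multiplying by `c^{2m}` gives the bound `(√2 + |c| m)^{2m}`.
-/

open MeasureTheory Real Finset
open Complex (I)

noncomputable def besselIntegrand (a : ℝ) (n : ℤ) (t : ℝ) : ℂ :=
  Complex.exp (I * ((a * sin t - n * t : ℝ) : ℂ))

/-- Bessel's integral: `besselJ a n = Jₙ(a)`. -/
noncomputable def besselJ (a : ℝ) (n : ℤ) : ℂ :=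
  (1 / (2 * π)) * ∫ t in (0 : ℝ)..2 * π, besselIntegrand a n t

lemma continuous_besselIntegrand (a : ℝ) (n : ℤ) : Continuous (besselIntegrand a n) := by
  unfold besselIntegrand
  fun_prop

lemma hasDerivAt_besselIntegrand (a : ℝ) (n : ℤ) (t : ℝ) :
    HasDerivAt (besselIntegrand a n)
      (I * ((a * cos t - n : ℝ) : ℂ) * besselIntegrand a n t) t := by
  have hphase : HasDerivAt (fun t => a * sin t - n * t) (a * cos t - n) t :=
    ((hasDerivAt_sin t).const_mul a).sub (by simpa using (hasDerivAt_id t).const_mul (n : ℝ))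
  convert (hphase.ofReal_comp.const_mul I).cexp using 1
  · rfl
  · rw [besselIntegrand, mul_comm]

lemma besselIntegrand_two_pi (a : ℝ) (n : ℤ) : besselIntegrand a n (2 * π) = 1 := by
  have : I * ((a * sin (2 * π) - n * (2 * π) : ℝ) : ℂ) = (-n : ℤ) * (2 * π * I) := by
    rw [sin_two_pi]; push_cast; ring
  rw [besselIntegrand, this, Complex.exp_int_mul_two_pi_mul_I]

lemma cos_mul_besselIntegrand (a : ℝ) (n : ℤ) (t : ℝ) :
    ((a * cos t : ℝ) : ℂ) * besselIntegrand a n t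
      = a / 2 * (besselIntegrand a (n - 1) t + besselIntegrand a (n + 1) t) := by
  have hshift : ∀ k : ℤ, besselIntegrand a (n + k) t
      = besselIntegrand a n t * Complex.exp (-k * t * I) := fun k => by
    rw [besselIntegrand, besselIntegrand, ← Complex.exp_add]; push_cast; ring_nf
  rw [sub_eq_add_neg, hshift, hshift, Complex.ofReal_mul, Complex.ofReal_cos, Complex.cos]
  push_cast
  ring_nf

theorem besselJ_recurrence (a : ℝ) (n : ℤ) :
    n * besselJ a n = a / 2 * (besselJ a (n - 1) + besselJ a (n + 1)) := by
  have hint : ∀ k : ℤ, IntervalIntegrable (besselIntegrand a k) volume 0 (2 * π) :=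
    fun k => (continuous_besselIntegrand a k).intervalIntegrable _ _
  have hderiv : ∫ t in (0 : ℝ)..2 * π, I * ((a * cos t - n : ℝ) : ℂ) * besselIntegrand a n t
      = 0 := by
    rw [intervalIntegral.integral_eq_sub_of_hasDerivAt
      (fun t _ => hasDerivAt_besselIntegrand a n t)
      (by apply Continuous.intervalIntegrable; unfold besselIntegrand; fun_prop),
      besselIntegrand_two_pi]
    simp [besselIntegrand]
  have hexpand : ∀ t, I * ((a * cos t - n : ℝ) : ℂ) * besselIntegrand a n t
      = I * (a / 2 * (besselIntegrand a (n - 1) t + besselIntegrand a (n + 1) t)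
          - n * besselIntegrand a n t) := fun t => by
    rw [← cos_mul_besselIntegrand]; push_cast; ring
  simp_rw [hexpand, intervalIntegral.integral_const_mul,
    intervalIntegral.integral_sub (((hint _).add (hint _)).const_mul _) ((hint n).const_mul _),
    intervalIntegral.integral_const_mul, intervalIntegral.integral_add (hint _) (hint _),
    mul_eq_zero, Complex.I_ne_zero, false_or] at hderiv
  rw [besselJ, besselJ, besselJ]
  linear_combination (-(1 / (2 * π)) : ℂ) * hderiv

lemma besselJ_eq_fourierCoeffOn (a : ℝ) (n : ℤ) :
    besselJ a n = fourierCoeffOn two_pi_pos (fun t => Complex.exp (I * (a * sin t : ℝ))) n := by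
  rw [fourierCoeffOn_eq_integral, besselJ, sub_zero, Complex.real_smul]
  push_cast
  congr 1
  refine intervalIntegral.integral_congr fun t _ => ?_
  rw [fourier_coe_apply, smul_eq_mul, besselIntegrand, ← Complex.exp_add]
  congr 1
  push_cast
  field_simp
  ring

theorem hasSum_sq_norm_besselJ (a : ℝ) : HasSum (fun n => ‖besselJ a n‖ ^ 2) 1 := by
  have hunit : ∀ t : ℝ, ‖Complex.exp (I * (a * sin t : ℝ))‖ = 1 := fun t => by
    rw [mul_comm, Complex.norm_exp_ofReal_mul_I]
  have hL2 : MemLp (fun t => Complex.exp (I * (a * sin t : ℝ))) 2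
      (volume.restrict (Set.Ioc 0 (2 * π))) :=
    MemLp.of_bound (by fun_prop) 1 (.of_forall fun t => (hunit t).le)
  convert hasSum_sq_fourierCoeffOn two_pi_pos hL2 using 1
  · simp_rw [besselJ_eq_fourierCoeffOn]
  · simp only [hunit, one_pow, intervalIntegral.integral_const, sub_zero, smul_eq_mul, mul_one]
    field_simp

theorem tsum_sq_norm_sum_mul_shift_le {G R : Type*} [AddGroup G] [SeminormedRing R]
    (s : Finset G) (d : G → R) {A : G → R} (hA : Summable fun n => ‖A n‖ ^ 2) :
    ∑' n, ‖∑ j ∈ s, d j * A (n + j)‖ ^ 2 ≤ (∑ j ∈ s, ‖d j‖) ^ 2 * ∑' n, ‖A n‖ ^ 2 := by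
  have hshift (j : G) : Summable fun n => ‖A (n + j)‖ ^ 2 :=
    (Equiv.addRight j).summable_iff (f := fun n => ‖A n‖ ^ 2) |>.mpr hA
  have htsum_shift (j : G) : ∑' n, ‖A (n + j)‖ ^ 2 = ∑' n, ‖A n‖ ^ 2 :=
    (Equiv.addRight j).tsum_eq fun n => ‖A n‖ ^ 2
  have hpoint (n : G) : ‖∑ j ∈ s, d j * A (n + j)‖ ^ 2
      ≤ (∑ j ∈ s, ‖d j‖) * ∑ j ∈ s, ‖d j‖ * ‖A (n + j)‖ ^ 2 :=
    calc ‖∑ j ∈ s, d j * A (n + j)‖ ^ 2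
        ≤ (∑ j ∈ s, ‖d j‖ * ‖A (n + j)‖) ^ 2 := by
          gcongr
          exact (norm_sum_le _ _).trans (sum_le_sum fun j _ => norm_mul_le _ _)
      _ ≤ _ := sum_sq_le_sum_mul_sum_of_sq_le_mul s (fun _ _ => norm_nonneg _)
          (fun _ _ => by positivity) fun _ _ => le_of_eq (by ring)
  have hsum : Summable fun n => (∑ j ∈ s, ‖d j‖) * ∑ j ∈ s, ‖d j‖ * ‖A (n + j)‖ ^ 2 :=
    (summable_sum fun j _ => (hshift j).mul_left _).mul_left _
  calc ∑' n, ‖∑ j ∈ s, d j * A (n + j)‖ ^ 2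
      ≤ ∑' n, (∑ j ∈ s, ‖d j‖) * ∑ j ∈ s, ‖d j‖ * ‖A (n + j)‖ ^ 2 :=
        Summable.tsum_le_tsum hpoint (hsum.of_nonneg_of_le (fun _ => by positivity) hpoint) hsum
    _ = (∑ j ∈ s, ‖d j‖) * ∑ j ∈ s, ‖d j‖ * ∑' n, ‖A (n + j)‖ ^ 2 := by
        rw [tsum_mul_left, Summable.tsum_finsetSum fun j _ => (hshift j).mul_left _]
        simp_rw [tsum_mul_left]
    _ = (∑ j ∈ s, ‖d j‖) ^ 2 * ∑' n, ‖A n‖ ^ 2 := by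
        simp only [htsum_shift, ← sum_mul]
        ring

section IndexMul

variable {a : ℝ} {A : ℤ → ℂ} {d : ℤ → ℂ} {M : ℕ}

/-- The effect on `d` of multiplying `∑ⱼ d j A (n+j)` by `n`, when `A` satisfies the Bessel
recurrence. -/
noncomputable def indexMulStep (a : ℝ) (d : ℤ → ℂ) (j : ℤ) : ℂ :=
  -j * d j + a / 2 * (d (j - 1) + d (j + 1))

lemma indexMulStep_eq_zero (hd : ∀ j ∉ Icc (-M : ℤ) M, d j = 0) :
    ∀ j ∉ Icc (-(M + 1 : ℕ) : ℤ) (M + 1 : ℕ), indexMulStep a d j = 0 := by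
  intro j hj
  simp only [mem_Icc, Nat.cast_add, Nat.cast_one] at hj hd
  rw [indexMulStep, hd j (by omega), hd (j - 1) (by omega), hd (j + 1) (by omega)]
  ring

lemma tsum_norm_indexMulStep_le (hd : ∀ j ∉ Icc (-M : ℤ) M, d j = 0) :
    ∑' j, ‖indexMulStep a d j‖ ≤ (M + |a|) * ∑' j, ‖d j‖ := by
  have hsum : Summable fun j => ‖d j‖ :=
    summable_of_ne_finset_zero fun j hj => by rw [hd j hj, norm_zero]
  have hsum_shift (k : ℤ) : Summable fun j => |a| / 2 * ‖d (j + k)‖ :=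
    ((Equiv.addRight k).summable_iff (f := fun j => ‖d j‖) |>.mpr hsum).mul_left _
  have htsum_shift (k : ℤ) : ∑' j, ‖d (j + k)‖ = ∑' j, ‖d j‖ :=
    (Equiv.addRight k).tsum_eq fun j => ‖d j‖
  have hpoint (j : ℤ) : ‖indexMulStep a d j‖
      ≤ M * ‖d j‖ + (|a| / 2 * ‖d (j + -1)‖ + |a| / 2 * ‖d (j + 1)‖) := by
    have hj : ‖(j : ℂ) * d j‖ ≤ M * ‖d j‖ := by
      by_cases hj : j ∈ Icc (-M : ℤ) M
      · rw [norm_mul, Complex.norm_intCast]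
        gcongr
        rw [← Int.cast_abs, ← Int.cast_natCast, Int.cast_le, abs_le]
        exact mem_Icc.mp hj
      · simp [hd j hj]
    have hadd := mul_le_mul_of_nonneg_left (norm_add_le (d (j + -1)) (d (j + 1)))
      (by positivity : 0 ≤ |a| / 2)
    calc ‖indexMulStep a d j‖
        ≤ ‖-(j : ℂ) * d j‖ + ‖(a : ℂ) / 2 * (d (j + -1) + d (j + 1))‖ := by
          rw [indexMulStep, sub_eq_add_neg]; exact norm_add_le _ _
      _ ≤ _ := by
          rw [neg_mul, norm_neg, norm_mul ((a : ℂ) / 2), norm_div, Complex.norm_real,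
            Complex.norm_two, Real.norm_eq_abs]
          linarith
  calc ∑' j, ‖indexMulStep a d j‖
      ≤ ∑' j, (M * ‖d j‖ + (|a| / 2 * ‖d (j + -1)‖ + |a| / 2 * ‖d (j + 1)‖)) :=
        Summable.tsum_le_tsum hpoint (summable_of_ne_finset_zero
          (s := Icc (-(M + 1 : ℕ) : ℤ) (M + 1 : ℕ)) fun j hj => by
            rw [indexMulStep_eq_zero hd j hj, norm_zero])
          ((hsum.mul_left _).add ((hsum_shift _).add (hsum_shift _)))
    _ = (M + |a|) * ∑' j, ‖d j‖ := by
      rw [Summable.tsum_add (hsum.mul_left _) ((hsum_shift _).add (hsum_shift _)),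
        Summable.tsum_add (hsum_shift _) (hsum_shift _), tsum_mul_left, tsum_mul_left,
        tsum_mul_left, htsum_shift, htsum_shift]
      ring

lemma mul_tsum_indexMulStep (hA : ∀ n : ℤ, n * A n = a / 2 * (A (n - 1) + A (n + 1)))
    (hd : d.HasFiniteSupport) (n : ℤ) :
    n * ∑' j, d j * A (n + j) = ∑' j, indexMulStep a d j * A (n + j) := by
  have hpoint (j : ℤ) : n * A (n + j)
      = a / 2 * (A (n + (j - 1)) + A (n + (j + 1))) - j * A (n + j) := by
    have hrec := hA (n + j)
    rw [add_sub_assoc, add_assoc] at hrec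
    push_cast at hrec ⊢
    linear_combination hrec
  have hreindex_pred : ∑' j, d j * A (n + (j - 1)) = ∑' j, d (j + 1) * A (n + j) := by
    rw [← (Equiv.addRight 1).tsum_eq]
    simp only [Equiv.coe_addRight, add_sub_cancel_right]
  have hreindex_succ : ∑' j, d j * A (n + (j + 1)) = ∑' j, d (j - 1) * A (n + j) := by
    rw [← (Equiv.subRight 1).tsum_eq]
    simp only [Equiv.subRight_apply, sub_add_cancel]
  have hsum_next : Summable fun j => d (j + 1) * A (n + j) :=
    summable_of_hasFiniteSupport (by fun_prop (disch := exact add_left_injective _))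
  have hsum_prev : Summable fun j => d (j - 1) * A (n + j) :=
    summable_of_hasFiniteSupport (by fun_prop (disch := exact sub_left_injective))
  have hsum : Summable fun j : ℤ => (j : ℂ) * d j * A (n + j) :=
    summable_of_hasFiniteSupport (by fun_prop)
  calc n * ∑' j, d j * A (n + j)
      = a / 2 * ∑' j, d j * A (n + (j - 1)) + a / 2 * ∑' j, d j * A (n + (j + 1))
          - ∑' j, j * d j * A (n + j) := by
        have h₁ : Summable fun j => a / 2 * (d j * A (n + (j - 1))) :=
          (summable_of_hasFiniteSupport (by fun_prop)).mul_left _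
        have h₂ : Summable fun j => a / 2 * (d j * A (n + (j + 1))) :=
          (summable_of_hasFiniteSupport (by fun_prop)).mul_left _
        rw [← tsum_mul_left (a := (n : ℂ)), ← tsum_mul_left (a := (a : ℂ) / 2),
          ← tsum_mul_left (a := (a : ℂ) / 2), ← Summable.tsum_add h₁ h₂,
          ← Summable.tsum_sub (h₁.add h₂) hsum]
        exact tsum_congr fun j => by rw [mul_left_comm, hpoint]; ring
    _ = a / 2 * ∑' j, d (j + 1) * A (n + j) + a / 2 * ∑' j, d (j - 1) * A (n + j)
          - ∑' j, j * d j * A (n + j) := by rw [hreindex_pred, hreindex_succ]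
    _ = ∑' j, indexMulStep a d j * A (n + j) := by
        rw [← tsum_mul_left, ← tsum_mul_left, ← Summable.tsum_add (hsum_next.mul_left _)
          (hsum_prev.mul_left _), ← Summable.tsum_sub ((hsum_next.mul_left _).add
          (hsum_prev.mul_left _)) hsum]
        exact tsum_congr fun j => by rw [indexMulStep]; ring

noncomputable def indexPowCoeff (a : ℝ) (m : ℕ) : ℤ → ℂ :=
  (indexMulStep a)^[m] (Pi.single 0 1)

lemma indexPowCoeff_succ (a : ℝ) (m : ℕ) :
    indexPowCoeff a (m + 1) = indexMulStep a (indexPowCoeff a m) :=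
  Function.iterate_succ_apply' ..

lemma indexPowCoeff_eq_zero (a : ℝ) (m : ℕ) :
    ∀ j ∉ Icc (-m : ℤ) m, indexPowCoeff a m j = 0 := by
  induction m with
  | zero =>
    intro j hj
    simp only [Nat.cast_zero, neg_zero, Icc_self, mem_singleton] at hj
    simp [indexPowCoeff, hj]
  | succ m ih =>
    rw [indexPowCoeff_succ]
    exact indexMulStep_eq_zero ih

lemma hasFiniteSupport_indexPowCoeff (a : ℝ) (m : ℕ) : (indexPowCoeff a m).HasFiniteSupport :=
  (Icc (-m : ℤ) m).finite_toSet.subset fun j hj =>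
    by_contra fun h => hj (indexPowCoeff_eq_zero a m j h)

lemma tsum_norm_indexPowCoeff_le (a : ℝ) (m : ℕ) :
    ∑' j, ‖indexPowCoeff a m j‖ ≤ (|a| + m) ^ m := by
  induction m with
  | zero => simp [indexPowCoeff, Pi.single_apply, apply_ite norm]
  | succ m ih =>
    rw [indexPowCoeff_succ]
    calc ∑' j, ‖indexMulStep a (indexPowCoeff a m) j‖
        ≤ (m + |a|) * ∑' j, ‖indexPowCoeff a m j‖ :=
          tsum_norm_indexMulStep_le (indexPowCoeff_eq_zero a m)
      _ ≤ (|a| + m) * (|a| + m) ^ m := by rw [add_comm]; gcongr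
      _ ≤ (|a| + (m + 1 : ℕ)) ^ (m + 1) := by rw [← pow_succ']; gcongr; simp

lemma pow_mul_eq_tsum_indexPowCoeff (hA : ∀ n : ℤ, n * A n = a / 2 * (A (n - 1) + A (n + 1)))
    (m : ℕ) (n : ℤ) : (n : ℂ) ^ m * A n = ∑' j, indexPowCoeff a m j * A (n + j) := by
  induction m with
  | zero => simp [indexPowCoeff, Pi.single_apply]
  | succ m ih =>
    rw [pow_succ', mul_assoc, ih, indexPowCoeff_succ,
      mul_tsum_indexMulStep hA (hasFiniteSupport_indexPowCoeff a m)]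

theorem tsum_sq_norm_pow_mul_le
    (hA : ∀ n : ℤ, n * A n = a / 2 * (A (n - 1) + A (n + 1)))
    (hA₂ : Summable fun n => ‖A n‖ ^ 2) (m : ℕ) :
    ∑' n : ℤ, ‖(n : ℂ) ^ m * A n‖ ^ 2 ≤ (|a| + m) ^ (2 * m) * ∑' n, ‖A n‖ ^ 2 := by
  have hsum (n : ℤ) :
      (n : ℂ) ^ m * A n = ∑ j ∈ Icc (-m : ℤ) m, indexPowCoeff a m j * A (n + j) := by
    rw [pow_mul_eq_tsum_indexPowCoeff hA]
    exact tsum_eq_sum fun j hj => by rw [indexPowCoeff_eq_zero a m j hj, zero_mul]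
  have hnorm : ∑ j ∈ Icc (-m : ℤ) m, ‖indexPowCoeff a m j‖ ≤ (|a| + m) ^ m := by
    rw [← tsum_eq_sum (L := .unconditional ℤ) fun j hj => by rw [indexPowCoeff_eq_zero a m j hj, norm_zero]]
    exact tsum_norm_indexPowCoeff_le a m
  simp_rw [hsum]
  calc _ ≤ (∑ j ∈ Icc (-m : ℤ) m, ‖indexPowCoeff a m j‖) ^ 2 * ∑' n, ‖A n‖ ^ 2 :=
        tsum_sq_norm_sum_mul_shift_le _ _ hA₂
    _ ≤ ((|a| + m) ^ m) ^ 2 * ∑' n, ‖A n‖ ^ 2 := by gcongr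
    _ = (|a| + m) ^ (2 * m) * ∑' n, ‖A n‖ ^ 2 := by rw [← pow_mul, mul_comm m]

end IndexMul

lemma arcsineFourierCoeff_eq_besselJ (c : ℝ) (n : ℤ) :
    arcsineFourierCoeff c n = besselJ (√2 / c) n := by
  rw [arcsineFourierCoeff, besselJ]
  congr 1
  refine intervalIntegral.integral_congr fun t _ => ?_
  rw [besselIntegrand, ← Complex.exp_add]
  push_cast
  ring_nf

/-- Moment bound for the discrete arcsine law: the `2m`-th moment
`Σ_{n∈ℤ} (cn)^{2m}|a_n(c)|²` is at most `(√2 + 2|c|m)^{2m}`. -/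
theorem discreteArcsine_even_moment_bound (c : ℝ) (hc : c ≠ 0) (m : ℕ) :
    (∑' n : ℤ, (c * (n : ℝ)) ^ (2 * m) * ‖arcsineFourierCoeff c n‖ ^ 2) ≤
      (Real.sqrt 2 + 2 * |c| * m) ^ (2 * m) := by
  have hJ := hasSum_sq_norm_besselJ (√2 / c)
  have hterm (n : ℤ) : (c * (n : ℝ)) ^ (2 * m) * ‖arcsineFourierCoeff c n‖ ^ 2
      = |c| ^ (2 * m) * ‖(n : ℂ) ^ m * besselJ (√2 / c) n‖ ^ 2 := by
    rw [arcsineFourierCoeff_eq_besselJ, norm_mul, norm_pow, Complex.norm_intCast, mul_pow,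
      mul_pow, ← pow_mul, mul_comm m 2, (even_two_mul m).pow_abs, (even_two_mul m).pow_abs,
      mul_assoc]
  have hscale : |c| * (|√2 / c| + m) = √2 + |c| * m := by
    rw [mul_add, abs_div, abs_of_nonneg (Real.sqrt_nonneg 2),
      mul_div_cancel₀ _ (abs_ne_zero.mpr hc)]
  calc ∑' n : ℤ, (c * (n : ℝ)) ^ (2 * m) * ‖arcsineFourierCoeff c n‖ ^ 2
      = |c| ^ (2 * m) * ∑' n : ℤ, ‖(n : ℂ) ^ m * besselJ (√2 / c) n‖ ^ 2 := by
        simp_rw [hterm, tsum_mul_left]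
    _ ≤ |c| ^ (2 * m) * ((|√2 / c| + m) ^ (2 * m) * 1) := by
        gcongr
        rw [← hJ.tsum_eq]
        exact tsum_sq_norm_pow_mul_le (besselJ_recurrence _) hJ.summable m
    _ = (√2 + |c| * m) ^ (2 * m) := by rw [mul_one, ← mul_pow, hscale]
    _ ≤ (√2 + 2 * |c| * m) ^ (2 * m) := by gcongr; nlinarith [abs_nonneg c]
end
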